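/- Suppose λ_k < α₁ < α₂ < λ_{k+1}, α₁ ≤ β₁, α₂ ≤ β₂, and m(α₁,β₁) = 0 = m(α₂,β₂). Then β₂ < β₁; that is, the curve α ↦ β(α) of zeros of m is strictly decreasing. Moreover, this curve is Lipschitz continuous on compact subsets of (λ_k, λ_{k+1}). -/

import Mathlib

open MeasureTheory RealInnerProductSpace Filter Topology

/-- The functional `J_{α,β}(u) = ½(B(u,u) - α∫_Ω (u⁺)² - β∫_Ω (u⁻)²)`, where the Hilbert
space `X₀` carries the Gagliardo-type inner product `B = ⟪·,·⟫` and `T : X₀ → L²(Ω)` is the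
embedding into `L²(Ω)`; note `∫_Ω (u⁺)² = ‖(Tu)⁺‖²_{L²}`. -/
noncomputable def Jfun {Ω : Type*} [MeasurableSpace Ω] {μ : Measure Ω}
    {X₀ : Type*} [NormedAddCommGroup X₀] [InnerProductSpace ℝ X₀]
    (T : X₀ →ₗ[ℝ] Lp ℝ 2 μ) (α β : ℝ) (u : X₀) : ℝ :=
  (⟪u, u⟫ - α * ‖Lp.posPart (T u)‖ ^ 2 - β * ‖Lp.negPart (T u)‖ ^ 2) / 2

/-!
The core is a compactness estimate. Fix `λ_k < A ≤ B`. For `a, b ∈ [A, B]`, a maximizer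
`w = u + v` of `J_{a,b}` on `v + V₁` with `‖v‖_{L²} = 1` and `J_{a,b}(w) ≤ Θ` has `‖w⁺‖_{L²}`
bounded below by a positive constant. Otherwise take such maximizers with `‖w⁺‖_{L²} → 0`.
Comparing `w` with `v` bounds `‖u‖_{L²}`, and then `J_{a,b}(w) ≤ Θ` bounds `w` in `X₀`, so a
subsequence has an `L²`-limit `g ≤ 0` with `‖g‖ ≥ 1`. Pushing the maximizers in the direction
of the positive eigenfunction `φ₁` and passing to the limit gives `(b - λ₁)⟪φ₁, g⟫ ≥ 0`, which
is impossible since `⟪φ₁, g⟫ < 0`. The symmetry `J_{a,b}(-w) = J_{b,a}(w)` gives the same bound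
for `‖w⁻‖_{L²}`.

Since `J_{a',b'} = J_{a,b} - ((a' - a)‖w⁺‖² + (b' - b)‖w⁻‖²)/2`, these bounds make `m` decrease
at least linearly in `α` and in `β`. So `m(α₁, β₁) = m(α₂, β₂) = 0` with `α₁ < α₂` forces
`β₂ < β₁`. For `x < y` on a compact set, going from `m(y, β(y)) = 0` to `m(y, β(x))` costs at
least `c (β(x) - β(y))`, and going from `m(x, β(x)) = 0` to `m(y, β(x))` costs at most
`C (y - x)`, so `β(x) - β(y) ≤ (C / c) (y - x)`.
-/

namespace MeasureTheory.Lp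

variable {α : Type*} [MeasurableSpace α] {μ : Measure α}

theorem negPart_neg {p : ENNReal} (f : Lp ℝ p μ) : negPart (-f) = posPart f := by
  rw [negPart, neg_neg]

theorem posPart_sub_negPart {p : ENNReal} (f : Lp ℝ p μ) : posPart f - negPart f = f := by
  ext
  filter_upwards [coeFn_posPart f, coeFn_negPart f, coeFn_sub (posPart f) (negPart f)]
    with x hpos hneg hsub
  rw [hsub, Pi.sub_apply, hpos, hneg, sub_neg_eq_add, max_add_min, add_zero]

theorem norm_posPart_sub_posPart_le (f g : Lp ℝ 2 μ) : ‖posPart f - posPart g‖ ≤ ‖f - g‖ :=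
  (LipschitzWith.norm_compLp_sub_le lipschitzWith_pos_part (max_eq_right le_rfl) f g).trans_eq
    (one_mul _)

theorem inner_posPart_negPart (f : Lp ℝ 2 μ) : ⟪posPart f, negPart f⟫ = 0 := by
  rw [L2.inner_def, ← integral_zero α ℝ]
  refine integral_congr_ae ?_
  filter_upwards [coeFn_posPart f, coeFn_negPart f] with x hpos hneg
  rcases le_total (f x) 0 with h | h <;> simp [hpos, hneg, h]

theorem norm_posPart_sq_add_norm_negPart_sq (f : Lp ℝ 2 μ) :
    ‖posPart f‖ ^ 2 + ‖negPart f‖ ^ 2 = ‖f‖ ^ 2 := by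
  conv_rhs => rw [← posPart_sub_negPart f]
  rw [norm_sub_sq_real, inner_posPart_negPart]
  ring

theorem inner_pos_of_ae_pos {h f : Lp ℝ 2 μ} (hh : ∀ᵐ x ∂μ, 0 < h x) (hf : 0 ≤ᵐ[μ] f)
    (hf0 : f ≠ 0) : 0 < ⟪h, f⟫ := by
  have hprod : 0 ≤ᵐ[μ] fun x => h x * f x := by
    filter_upwards [hh, hf] with x h1 h2 using mul_nonneg h1.le h2
  have hint : Integrable (fun x => h x * f x) μ := by
    simpa [Real.inner_apply, mul_comm] using L2.integrable_inner (𝕜 := ℝ) h f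
  have hinner : ⟪h, f⟫ = ∫ x, h x * f x ∂μ := by
    simp only [L2.inner_def, Real.inner_apply]
  rw [hinner]
  refine (integral_nonneg_of_ae hprod).lt_of_ne fun h0 => hf0 ?_
  rw [eq_zero_iff_ae_eq_zero]
  filter_upwards [(integral_eq_zero_iff_of_nonneg_ae hprod hint).1 h0.symm, hh]
    with x hx hpos using (mul_eq_zero.1 hx).resolve_left hpos.ne'

theorem inner_neg_of_posPart_eq_zero {h g : Lp ℝ 2 μ} (hh : ∀ᵐ x ∂μ, 0 < h x)
    (hg : posPart g = 0) (hg0 : g ≠ 0) : ⟪h, g⟫ < 0 := by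
  have hg' : g = -negPart g := by rw [← zero_sub, ← hg, posPart_sub_negPart]
  have hN : negPart g ≠ 0 := fun h0 => hg0 (by rw [hg', h0, neg_zero])
  have hNnonneg : 0 ≤ᵐ[μ] negPart g := by
    filter_upwards [coeFn_negPart g] with x hx
    simp [hx]
  rw [hg', inner_neg_right, neg_lt_zero]
  exact inner_pos_of_ae_pos hh hNnonneg hN

noncomputable def asymNormSq (a b : ℝ) (f : Lp ℝ 2 μ) : ℝ :=
  a * ‖posPart f‖ ^ 2 + b * ‖negPart f‖ ^ 2

theorem asymNormSq_neg (a b : ℝ) (f : Lp ℝ 2 μ) : asymNormSq a b (-f) = asymNormSq b a f := by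
  rw [asymNormSq, asymNormSq, negPart_neg, add_comm]
  rfl

theorem le_asymNormSq {a b A : ℝ} (ha : A ≤ a) (hb : A ≤ b) (f : Lp ℝ 2 μ) :
    A * ‖f‖ ^ 2 ≤ asymNormSq a b f := by
  rw [← norm_posPart_sq_add_norm_negPart_sq, asymNormSq, mul_add]
  gcongr

theorem asymNormSq_le {a b B : ℝ} (ha : a ≤ B) (hb : b ≤ B) (f : Lp ℝ 2 μ) :
    asymNormSq a b f ≤ B * ‖f‖ ^ 2 := by
  rw [← norm_posPart_sq_add_norm_negPart_sq, asymNormSq, mul_add]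
  gcongr

theorem continuous_asymNormSq :
    Continuous fun q : (ℝ × ℝ) × Lp ℝ 2 μ => asymNormSq q.1.1 q.1.2 q.2 := by
  have hpos := (continuous_posPart (p := 2) (μ := μ)).comp (continuous_snd (X := ℝ × ℝ))
  have hneg := (continuous_negPart (p := 2) (μ := μ)).comp (continuous_snd (X := ℝ × ℝ))
  unfold asymNormSq
  fun_prop

theorem sub_mul_inner_nonneg_of_posPart_eq_zero {a b lam : ℝ} {g h : Lp ℝ 2 μ} (ha : 0 ≤ a)
    (hb : 0 ≤ b) (hg : posPart g = 0)
    (H : ∀ t > 0, 2 * t * lam * ⟪h, g⟫ + t ^ 2 * lam * ‖h‖ ^ 2 ≤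
      asymNormSq a b (g + t • h) - asymNormSq a b g) :
    0 ≤ (b - lam) * ⟪h, g⟫ := by
  -- Since `g⁺ = 0`, `‖(g + t h)⁺‖ ≤ t ‖h‖`: the positive part only enters at order `t²`.
  have key : ∀ t > 0, 2 * ((lam - b) * ⟪h, g⟫) ≤ t * ((a + b - lam) * ‖h‖ ^ 2) := by
    intro t ht
    have hQg : asymNormSq a b g = b * ‖g‖ ^ 2 := by
      rw [asymNormSq, ← norm_posPart_sq_add_norm_negPart_sq g, hg]
      simp
    have hP : ‖posPart (g + t • h)‖ ≤ t * ‖h‖ := by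
      simpa [hg, norm_smul, abs_of_pos ht] using norm_posPart_sub_posPart_le (g + t • h) g
    have hsplit := norm_posPart_sq_add_norm_negPart_sq (g + t • h)
    have hexp : ‖g + t • h‖ ^ 2 = ‖g‖ ^ 2 + 2 * t * ⟪h, g⟫ + t ^ 2 * ‖h‖ ^ 2 := by
      rw [norm_add_sq_real, inner_smul_right, norm_smul, Real.norm_eq_abs, abs_of_pos ht,
        real_inner_comm]
      ring
    have hPsq : ‖posPart (g + t • h)‖ ^ 2 ≤ (t * ‖h‖) ^ 2 := pow_le_pow_left₀ (norm_nonneg _) hP 2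
    have := H t ht
    rw [hQg, asymNormSq] at this
    have h1 : t * (2 * ((lam - b) * ⟪h, g⟫)) ≤ t * (t * ((a + b - lam) * ‖h‖ ^ 2)) := by
      nlinarith [mul_le_mul_of_nonneg_left hPsq ha, mul_nonneg hb (sq_nonneg ‖posPart (g + t • h)‖)]
    exact le_of_mul_le_mul_left h1 ht
  have hlim : Tendsto (fun t : ℝ => t * ((a + b - lam) * ‖h‖ ^ 2)) (𝓝[>] 0) (𝓝 0) := by
    have := ((continuous_mul_const ((a + b - lam) * ‖h‖ ^ 2)).tendsto 0).mono_left
      (nhdsWithin_le_nhds (s := Set.Ioi 0))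
    simpa using this
  have := ge_of_tendsto hlim (eventually_nhdsWithin_of_forall key)
  linarith

end MeasureTheory.Lp

section Functional

variable {α : Type*} [MeasurableSpace α] {μ : Measure α}
  {X₀ : Type*} [NormedAddCommGroup X₀] [InnerProductSpace ℝ X₀] (T : X₀ →ₗ[ℝ] Lp ℝ 2 μ)

theorem Jfun_eq (a b : ℝ) (w : X₀) : Jfun T a b w = (⟪w, w⟫ - Lp.asymNormSq a b (T w)) / 2 := by
  rw [Jfun, Lp.asymNormSq]
  ring

theorem Jfun_neg (a b : ℝ) (w : X₀) : Jfun T a b (-w) = Jfun T b a w := by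
  rw [Jfun_eq, Jfun_eq, map_neg, Lp.asymNormSq_neg, inner_neg_neg]

theorem Jfun_sub_Jfun (a b a' b' : ℝ) (w : X₀) :
    Jfun T a b w - Jfun T a' b' w =
      ((a' - a) * ‖Lp.posPart (T w)‖ ^ 2 + (b' - b) * ‖Lp.negPart (T w)‖ ^ 2) / 2 := by
  simp only [Jfun]
  ring

variable {T} {V₁ : Submodule ℝ X₀} {a b : ℝ} {u v : X₀}

theorem IsMaxOn.Jfun_neg_swap (h : IsMaxOn (fun x => Jfun T a b (x + v)) V₁ u) :
    IsMaxOn (fun x => Jfun T b a (x + -v)) V₁ (-u) := by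
  refine isMaxOn_iff.2 fun x hx => ?_
  have := isMaxOn_iff.1 h (-x) (neg_mem hx)
  rwa [show x + -v = -(-x + v) by abel, show -u + -v = -(u + v) by abel, _root_.Jfun_neg,
    _root_.Jfun_neg]

theorem IsMaxOn.two_mul_inner_le {lam : ℝ} {φ : X₀}
    (h : IsMaxOn (fun x => Jfun T a b (x + v)) V₁ u) (hu : u ∈ V₁) (hφ : φ ∈ V₁)
    (hφeig : ∀ ψ, ⟪φ, ψ⟫ = lam * ⟪T φ, T ψ⟫) (t : ℝ) :
    2 * t * lam * ⟪T φ, T (u + v)⟫ + t ^ 2 * lam * ‖T φ‖ ^ 2 ≤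
      Lp.asymNormSq a b (T (u + v) + t • T φ) - Lp.asymNormSq a b (T (u + v)) := by
  have hle := isMaxOn_iff.1 h (u + t • φ) (V₁.add_mem hu (V₁.smul_mem t hφ))
  rw [show u + t • φ + v = u + v + t • φ by abel, Jfun_eq, Jfun_eq, map_add, map_smul,
    real_inner_add_add_self] at hle
  simp only [real_inner_smul_left, real_inner_smul_right] at hle
  rw [real_inner_comm φ, hφeig, hφeig, real_inner_self_eq_norm_sq (T φ)] at hle
  linarith

theorem IsMaxOn.sq_norm_map_add_le {lk A B : ℝ}
    (h : IsMaxOn (fun x => Jfun T a b (x + v)) V₁ u)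
    (huu : ⟪u, u⟫ ≤ lk * ‖T u‖ ^ 2) (huv : ⟪u, v⟫ = 0) (hTuv : ⟪T u, T v⟫ = 0) (hv : ‖T v‖ = 1)
    (hA : lk < A) (ha : a ∈ Set.Icc A B) (hb : b ∈ Set.Icc A B) :
    ‖T (u + v)‖ ^ 2 ≤ (B - A) / (A - lk) + 1 := by
  have hle := isMaxOn_iff.1 h 0 V₁.zero_mem
  rw [zero_add, Jfun_eq, Jfun_eq, real_inner_add_add_self, huv] at hle
  have hTw : ‖T (u + v)‖ ^ 2 = ‖T u‖ ^ 2 + 1 := by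
    rw [map_add, norm_add_sq_real, hTuv, hv]
    ring
  have hQw := Lp.le_asymNormSq ha.1 hb.1 (T (u + v))
  have hQv := Lp.asymNormSq_le ha.2 hb.2 (T v)
  rw [hv] at hQv
  rw [hTw] at hQw ⊢
  have : ‖T u‖ ^ 2 ≤ (B - A) / (A - lk) := by
    rw [le_div_iff₀ (sub_pos.2 hA)]
    nlinarith
  linarith

theorem two_mul_inner_le_of_tendsto {lam : ℝ} {φ : X₀} {p : ℕ → ℝ × ℝ} {u v : ℕ → X₀}
    {p' : ℝ × ℝ} {g : Lp ℝ 2 μ}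
    (hmax : ∀ j, IsMaxOn (fun x => Jfun T (p j).1 (p j).2 (x + v j)) V₁ (u j))
    (hu : ∀ j, u j ∈ V₁) (hφ : φ ∈ V₁) (hφeig : ∀ ψ, ⟪φ, ψ⟫ = lam * ⟪T φ, T ψ⟫)
    (hp : Tendsto p atTop (𝓝 p')) (hg : Tendsto (fun j => T (u j + v j)) atTop (𝓝 g)) (t : ℝ) :
    2 * t * lam * ⟪T φ, g⟫ + t ^ 2 * lam * ‖T φ‖ ^ 2 ≤
      Lp.asymNormSq p'.1 p'.2 (g + t • T φ) - Lp.asymNormSq p'.1 p'.2 g := by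
  have hQ : ∀ (f : ℕ → Lp ℝ 2 μ) (f' : Lp ℝ 2 μ), Tendsto f atTop (𝓝 f') →
      Tendsto (fun j => Lp.asymNormSq (p j).1 (p j).2 (f j)) atTop
        (𝓝 (Lp.asymNormSq p'.1 p'.2 f')) :=
    fun f f' hf => (Lp.continuous_asymNormSq.tendsto (p', f')).comp (hp.prodMk_nhds hf)
  refine le_of_tendsto_of_tendsto' ?_ ((hQ _ _ (hg.add_const (t • T φ))).sub (hQ _ _ hg))
    fun j => (hmax j).two_mul_inner_le (hu j) hφ hφeig t
  exact ((tendsto_const_nhds.inner hg).const_mul _).add_const _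

end Functional

section Splitting

variable {α : Type*} [MeasurableSpace α] {μ : Measure α}
  {X₀ : Type*} [NormedAddCommGroup X₀] [InnerProductSpace ℝ X₀]

structure EigenSplitting (T : X₀ →ₗ[ℝ] Lp ℝ 2 μ) (V₁ V₂ : Submodule ℝ X₀) (lk lam : ℝ)
    (φ : X₀) : Prop where
  lam_pos : 0 < lam
  lam_le : lam ≤ lk
  orthogonal : ∀ v ∈ V₂, ∀ u ∈ V₁, ⟪u, v⟫ = 0 ∧ ⟪T u, T v⟫ = 0
  inner_self_le : ∀ u ∈ V₁, ⟪u, u⟫ ≤ lk * ‖T u‖ ^ 2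
  mem : φ ∈ V₁
  ae_pos : ∀ᵐ x ∂μ, 0 < T φ x
  inner_eq : ∀ ψ, ⟪φ, ψ⟫ = lam * ⟪T φ, T ψ⟫
  compact : ∀ (u : ℕ → X₀) (C : ℝ), (∀ j, ‖u j‖ ≤ C) → ∃ (w : Lp ℝ 2 μ) (σ : ℕ → ℕ),
    StrictMono σ ∧ Tendsto (fun j => ‖T (u (σ j)) - w‖) atTop (𝓝 0)

namespace EigenSplitting

variable {T : X₀ →ₗ[ℝ] Lp ℝ 2 μ} {V₁ V₂ : Submodule ℝ X₀} {lk lam : ℝ} {φ : X₀}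

theorem posPart_ne_zero_of_tendsto (hS : EigenSplitting T V₁ V₂ lk lam φ)
    {p : ℕ → ℝ × ℝ} {u v : ℕ → X₀} {p' : ℝ × ℝ} {g : Lp ℝ 2 μ}
    (hmax : ∀ j, IsMaxOn (fun x => Jfun T (p j).1 (p j).2 (x + v j)) V₁ (u j))
    (hu : ∀ j, u j ∈ V₁) (hv : ∀ j, v j ∈ V₂) (hvn : ∀ j, ‖T (v j)‖ = 1)
    (hp : Tendsto p atTop (𝓝 p')) (ha' : lk < p'.1) (hb' : lk < p'.2)
    (hg : Tendsto (fun j => T (u j + v j)) atTop (𝓝 g)) :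
    Lp.posPart g ≠ 0 := by
  intro hPg
  have hg0 : g ≠ 0 := by
    rintro rfl
    have hge : ∀ j, 1 ≤ ‖T (u j + v j)‖ := fun j => by
      have h := norm_add_sq_eq_norm_sq_add_norm_sq_real (hS.orthogonal _ (hv j) _ (hu j)).2
      rw [hvn j, ← map_add] at h
      nlinarith [norm_nonneg (T (u j + v j)), sq_nonneg ‖T (u j)‖]
    have := ge_of_tendsto' hg.norm hge
    norm_num at this
  have hlam : lam < p'.2 := hS.lam_le.trans_lt hb'
  have hineq := Lp.sub_mul_inner_nonneg_of_posPart_eq_zero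
    (by linarith [hS.lam_pos, hS.lam_le]) (hS.lam_pos.trans hlam).le hPg fun t _ =>
      two_mul_inner_le_of_tendsto hmax hu hS.mem hS.inner_eq hp hg t
  exact hineq.not_gt (mul_neg_of_pos_of_neg (sub_pos.2 hlam)
    (Lp.inner_neg_of_posPart_eq_zero hS.ae_pos hPg hg0))

theorem exists_pos_le_sq_norm_posPart (hS : EigenSplitting T V₁ V₂ lk lam φ) {A : ℝ}
    (hA : lk < A) (B Θ : ℝ) :
    ∃ c > 0, ∀ a ∈ Set.Icc A B, ∀ b ∈ Set.Icc A B, ∀ u ∈ V₁, ∀ v ∈ V₂, ‖T v‖ = 1 →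
      IsMaxOn (fun x => Jfun T a b (x + v)) V₁ u → Jfun T a b (u + v) ≤ Θ →
      c ≤ ‖Lp.posPart (T (u + v))‖ ^ 2 := by
  by_contra! hcon
  choose a ha b hb u hu v hv hvn hmax hJ hsmall using
    fun j : ℕ => hcon (1 / ((j : ℝ) + 1)) (by positivity)
  obtain ⟨p', hp', σ, hσ, hp⟩ := (isCompact_Icc.prod isCompact_Icc).tendsto_subseq
    (x := fun j => (a j, b j)) fun j => ⟨ha j, hb j⟩
  have hbound : ∀ j, ‖u (σ j) + v (σ j)‖ ≤ √(2 * Θ + B * ((B - A) / (A - lk) + 1)) := by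
    intro j
    have ⟨huv, hTuv⟩ := hS.orthogonal _ (hv (σ j)) _ (hu (σ j))
    have hTw := (hmax (σ j)).sq_norm_map_add_le (hS.inner_self_le _ (hu (σ j))) huv hTuv
      (hvn (σ j)) hA (ha (σ j)) (hb (σ j))
    have hQ := Lp.asymNormSq_le (ha (σ j)).2 (hb (σ j)).2 (T (u (σ j) + v (σ j)))
    have hB : 0 ≤ B := by linarith [(ha 0).1, (ha 0).2, hS.lam_pos, hS.lam_le]
    have hJw := hJ (σ j)
    rw [Jfun_eq, real_inner_self_eq_norm_sq] at hJw
    refine Real.le_sqrt_of_sq_le ?_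
    nlinarith [mul_le_mul_of_nonneg_left hTw hB]
  obtain ⟨g, τ, hτ, hg⟩ := hS.compact _ _ hbound
  have hTg : Tendsto (fun j => T (u (σ (τ j)) + v (σ (τ j)))) atTop (𝓝 g) :=
    tendsto_iff_norm_sub_tendsto_zero.2 hg
  refine hS.posPart_ne_zero_of_tendsto (fun j => hmax (σ (τ j))) (fun j => hu _) (fun j => hv _)
    (fun j => hvn _) (hp.comp hτ.tendsto_atTop) (hA.trans_le hp'.1.1) (hA.trans_le hp'.2.1) hTg ?_
  have hlim := ((Lp.continuous_posPart.tendsto g).comp hTg).norm.pow 2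
  have hzero : Tendsto (fun j => ‖Lp.posPart (T (u (σ (τ j)) + v (σ (τ j))))‖ ^ 2) atTop (𝓝 0) :=
    squeeze_zero (fun j => sq_nonneg _) (fun j => (hsmall (σ (τ j))).le)
      (tendsto_one_div_add_atTop_nhds_zero_nat.comp (hσ.comp hτ).tendsto_atTop)
  simpa using tendsto_nhds_unique hlim hzero

theorem exists_pos_le_sq_norm_negPart (hS : EigenSplitting T V₁ V₂ lk lam φ) {A : ℝ}
    (hA : lk < A) (B Θ : ℝ) :
    ∃ c > 0, ∀ a ∈ Set.Icc A B, ∀ b ∈ Set.Icc A B, ∀ u ∈ V₁, ∀ v ∈ V₂, ‖T v‖ = 1 →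
      IsMaxOn (fun x => Jfun T a b (x + v)) V₁ u → Jfun T a b (u + v) ≤ Θ →
      c ≤ ‖Lp.negPart (T (u + v))‖ ^ 2 := by
  obtain ⟨c, hc, hle⟩ := hS.exists_pos_le_sq_norm_posPart hA B Θ
  refine ⟨c, hc, fun a ha b hb u hu v hv hvn hmax hJ => ?_⟩
  have := hle b hb a ha (-u) (neg_mem hu) (-v) (neg_mem hv) (by rwa [map_neg, norm_neg])
    hmax.Jfun_neg_swap (by rwa [← neg_add, Jfun_neg])
  rwa [← neg_add, map_neg] at this

end EigenSplitting

end Splitting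

section Levels

variable {α : Type*} [MeasurableSpace α] {μ : Measure α}
  {X₀ : Type*} [NormedAddCommGroup X₀] [InnerProductSpace ℝ X₀] (T : X₀ →ₗ[ℝ] Lp ℝ 2 μ)
  {V₁ V₂ : Submodule ℝ X₀} (M : ℝ → ℝ → V₂ → V₁)

/-- The values of the reduced functional `J̃_{a,b}(v) = J_{a,b}(M_{a,b}(v) + v)` on the
`L²`-unit sphere of `V₂`, whose infimum is `m(a, b)`. -/
def reducedLevels (a b : ℝ) : Set ℝ :=
  {r | ∃ v : V₂, ‖T (v : X₀)‖ = 1 ∧ r = Jfun T a b ((M a b v : X₀) + (v : X₀))}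

variable {T M}

theorem bddBelow_reducedLevels {a b : ℝ}
    (hmax : ∀ v : V₂, IsMaxOn (fun x => Jfun T a b (x + v)) V₁ (M a b v)) (hab : a ≤ b) :
    BddBelow (reducedLevels T M a b) := by
  refine ⟨-b / 2, ?_⟩
  rintro _ ⟨v, hv, rfl⟩
  have hle := isMaxOn_iff.1 (hmax v) 0 V₁.zero_mem
  have hQ := Lp.asymNormSq_le hab le_rfl (T v)
  rw [zero_add, Jfun_eq] at hle
  rw [hv] at hQ
  nlinarith [real_inner_self_nonneg (x := (v : X₀))]

theorem le_sub_of_isGLB_reducedLevels {a b a' b' m m' c Θ : ℝ}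
    (hmax : ∀ v : V₂, IsMaxOn (fun x => Jfun T a b (x + v)) V₁ (M a b v))
    (hm : IsGLB (reducedLevels T M a b) m) (hm' : IsGLB (reducedLevels T M a' b') m')
    (hΘ : m < Θ)
    (hc : ∀ v : V₂, ‖T v‖ = 1 → Jfun T a' b' (M a' b' v + v) ≤ Θ →
      c ≤ (a' - a) * ‖Lp.posPart (T (M a' b' v + v))‖ ^ 2 +
        (b' - b) * ‖Lp.negPart (T (M a' b' v + v))‖ ^ 2)
    (ha : a ≤ a') (hb : b ≤ b') :
    m' ≤ m - c / 2 := by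
  refine le_of_forall_pos_lt_add fun ε hε => ?_
  obtain ⟨_, ⟨v, hv, rfl⟩, -, hlt⟩ := hm.exists_between_self_add (lt_min hε (sub_pos.2 hΘ))
  have hJ := isMaxOn_iff.1 (hmax v) _ (M a' b' v).2
  have hdiff := Jfun_sub_Jfun T a b a' b' (M a' b' v + v)
  have hgap : 0 ≤ (a' - a) * ‖Lp.posPart (T (M a' b' v + v))‖ ^ 2 +
      (b' - b) * ‖Lp.negPart (T (M a' b' v + v))‖ ^ 2 := by
    have := sub_nonneg.2 ha
    have := sub_nonneg.2 hb
    positivity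
  have hcv := hc v hv (by linarith [min_le_right ε (Θ - m)])
  have hm'v := hm'.1 ⟨v, hv, rfl⟩
  linarith [min_le_left ε (Θ - m)]

theorem sub_le_of_isGLB_reducedLevels {a a' b m m' K : ℝ}
    (hmax : ∀ v : V₂, IsMaxOn (fun x => Jfun T a' b (x + v)) V₁ (M a' b v))
    (hm : IsGLB (reducedLevels T M a b) m) (hm' : IsGLB (reducedLevels T M a' b) m')
    (hK : ∀ v : V₂, ‖T v‖ = 1 → ‖Lp.posPart (T (M a b v + v))‖ ^ 2 ≤ K) (ha : a ≤ a') :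
    m - (a' - a) * K / 2 ≤ m' := by
  refine hm'.2 ?_
  rintro _ ⟨v, hv, rfl⟩
  have hJ := isMaxOn_iff.1 (hmax v) _ (M a b v).2
  have hdiff := Jfun_sub_Jfun T a b a' b (M a b v + v)
  have hmv := hm.1 ⟨v, hv, rfl⟩
  nlinarith [mul_le_mul_of_nonneg_left (hK v hv) (sub_nonneg.2 ha)]

theorem mul_le_mul_of_isGLB_reducedLevels {x y b b' c K m : ℝ}
    (hmax : ∀ v : V₂, IsMaxOn (fun x => Jfun T y b (x + v)) V₁ (M y b v))
    (hmax' : ∀ v : V₂, IsMaxOn (fun x => Jfun T y b' (x + v)) V₁ (M y b' v))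
    (hxb' : IsGLB (reducedLevels T M x b') 0) (hyb : IsGLB (reducedLevels T M y b) 0)
    (hyb' : IsGLB (reducedLevels T M y b') m) (hxy : x ≤ y) (hb : b ≤ b')
    (hc : ∀ v : V₂, ‖T v‖ = 1 → Jfun T y b' (M y b' v + v) ≤ 1 →
      c ≤ ‖Lp.negPart (T (M y b' v + v))‖ ^ 2)
    (hK : ∀ v : V₂, ‖T v‖ = 1 → ‖Lp.posPart (T (M x b' v + v))‖ ^ 2 ≤ K) :
    (b' - b) * c ≤ (y - x) * K := by
  have hdown := le_sub_of_isGLB_reducedLevels (c := (b' - b) * c) hmax hyb hyb' one_pos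
    (fun v hv hJ => by nlinarith [hc v hv hJ, sq_nonneg ‖Lp.posPart (T (M y b' v + v))‖])
    le_rfl hb
  have hup := sub_le_of_isGLB_reducedLevels hmax' hxb' hyb' hK hxy
  linarith

end Levels

theorem AntitoneOn.abs_sub_le_mul_abs_sub {f : ℝ → ℝ} {s : Set ℝ} {C : ℝ} (hf : AntitoneOn f s)
    (h : ∀ x ∈ s, ∀ y ∈ s, x < y → f x - f y ≤ C * (y - x)) :
    ∀ x ∈ s, ∀ y ∈ s, |f y - f x| ≤ C * |y - x| := by
  intro x hx y hy
  rcases lt_trichotomy x y with hxy | rfl | hxy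
  · rw [abs_sub_comm, abs_of_nonneg (sub_nonneg.2 (hf hx hy hxy.le)), abs_of_pos (sub_pos.2 hxy)]
    exact h x hx y hy hxy
  · simp
  · rw [abs_of_nonneg (sub_nonneg.2 (hf hy hx hxy.le)), abs_sub_comm, abs_of_pos (sub_pos.2 hxy)]
    exact h y hy x hx hxy

namespace EigenSplitting

variable {α : Type*} [MeasurableSpace α] {μ : Measure α}
  {X₀ : Type*} [NormedAddCommGroup X₀] [InnerProductSpace ℝ X₀] {T : X₀ →ₗ[ℝ] Lp ℝ 2 μ}
  {V₁ V₂ : Submodule ℝ X₀} {lk lam : ℝ} {φ : X₀} {M : ℝ → ℝ → V₂ → V₁} {m : ℝ → ℝ → ℝ}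

theorem lt_of_isGLB_reducedLevels (hS : EigenSplitting T V₁ V₂ lk lam φ)
    (hmax : ∀ a b, lk < a → a ≤ b → ∀ v : V₂,
      IsMaxOn (fun x => Jfun T a b (x + v)) V₁ (M a b v))
    {a₁ b₁ a₂ b₂ m₁ m₂ : ℝ} (h₁ : lk < a₁) (h₁₂ : a₁ < a₂) (hab₁ : a₁ ≤ b₁) (hab₂ : a₂ ≤ b₂)
    (hb : b₁ ≤ b₂) (hm₁ : IsGLB (reducedLevels T M a₁ b₁) m₁)
    (hm₂ : IsGLB (reducedLevels T M a₂ b₂) m₂) :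
    m₂ < m₁ := by
  obtain ⟨c, hc, hcP⟩ := hS.exists_pos_le_sq_norm_posPart (h₁.trans h₁₂) b₂ (m₁ + 1)
  have hP : ∀ v : V₂, ‖T v‖ = 1 → Jfun T a₂ b₂ (M a₂ b₂ v + v) ≤ m₁ + 1 →
      (a₂ - a₁) * c ≤ (a₂ - a₁) * ‖Lp.posPart (T (M a₂ b₂ v + v))‖ ^ 2 +
        (b₂ - b₁) * ‖Lp.negPart (T (M a₂ b₂ v + v))‖ ^ 2 := fun v hv hJ => by
    have := hcP a₂ ⟨le_rfl, hab₂⟩ b₂ ⟨hab₂, le_rfl⟩ _ (M a₂ b₂ v).2 _ v.2 hv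
      (hmax a₂ b₂ (h₁.trans h₁₂) hab₂ v) hJ
    nlinarith [sq_nonneg ‖Lp.negPart (T (M a₂ b₂ v + v))‖]
  have := le_sub_of_isGLB_reducedLevels (hmax a₁ b₁ h₁ hab₁) hm₁ hm₂ (lt_add_one m₁) hP
    h₁₂.le hb
  linarith [mul_pos (sub_pos.2 h₁₂) hc]

theorem exists_abs_sub_le_mul_abs_sub (hS : EigenSplitting T V₁ V₂ lk lam φ)
    (hmax : ∀ a b, lk < a → a ≤ b → ∀ v : V₂,
      IsMaxOn (fun x => Jfun T a b (x + v)) V₁ (M a b v))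
    (hglb : ∀ a b, lk < a → a ≤ b → IsGLB (reducedLevels T M a b) (m a b))
    {Kc : Set ℝ} {β : ℝ → ℝ} (hKc : IsCompact Kc) (hlk : Kc ⊆ Set.Ioi lk)
    (hβ : ∀ a ∈ Kc, a ≤ β a ∧ m a (β a) = 0) (hanti : StrictAntiOn β Kc) :
    ∃ C, 0 ≤ C ∧ ∀ a₁ ∈ Kc, ∀ a₂ ∈ Kc, |β a₂ - β a₁| ≤ C * |a₂ - a₁| := by
  rcases Kc.eq_empty_or_nonempty with rfl | hne
  · exact ⟨0, le_rfl, by simp⟩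
  have hAK : sInf Kc ∈ Kc := hKc.sInf_mem hne
  set A := sInf Kc
  set B := β A
  have hA : lk < A := hlk hAK
  have hAx : ∀ x ∈ Kc, A ≤ x := fun x hx => csInf_le hKc.bddBelow hx
  have hβB : ∀ x ∈ Kc, β x ≤ B := fun x hx => hanti.antitoneOn hAK hx (hAx x hx)
  have hIcc : ∀ x ∈ Kc, x ∈ Set.Icc A B ∧ β x ∈ Set.Icc A B := fun x hx =>
    ⟨⟨hAx x hx, (hβ x hx).1.trans (hβB x hx)⟩, ⟨(hAx x hx).trans (hβ x hx).1, hβB x hx⟩⟩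
  obtain ⟨c, hc, hcN⟩ := hS.exists_pos_le_sq_norm_negPart hA B 1
  set K := (B - A) / (A - lk) + 1
  have hK : 0 ≤ K := by
    have := div_nonneg (sub_nonneg.2 (hIcc A hAK).2.1) (sub_pos.2 hA).le
    positivity
  refine ⟨K / c, by positivity, hanti.antitoneOn.abs_sub_le_mul_abs_sub fun x hx y hy hxy => ?_⟩
  have hlkx := hlk hx
  have hlky := hlk hy
  have hβxy := hanti hx hy hxy
  have hyβx : y ≤ β x := (hβ y hy).1.trans hβxy.le
  have hP : ∀ v : V₂, ‖T v‖ = 1 → ‖Lp.posPart (T (M x (β x) v + v))‖ ^ 2 ≤ K := fun v hv => by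
    have ⟨huv, hTuv⟩ := hS.orthogonal _ v.2 _ (M x (β x) v).2
    have := (hmax x (β x) hlkx (hβ x hx).1 v).sq_norm_map_add_le
      (hS.inner_self_le _ (M x (β x) v).2) huv hTuv hv hA (hIcc x hx).1 (hIcc x hx).2
    nlinarith [Lp.norm_posPart_sq_add_norm_negPart_sq (T (M x (β x) v + v)),
      sq_nonneg ‖Lp.negPart (T (M x (β x) v + v))‖]
  have := mul_le_mul_of_isGLB_reducedLevels (hmax y (β y) hlky (hβ y hy).1)
    (hmax y (β x) hlky hyβx) ((hβ x hx).2 ▸ hglb x (β x) hlkx (hβ x hx).1)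
    ((hβ y hy).2 ▸ hglb y (β y) hlky (hβ y hy).1) (hglb y (β x) hlky hyβx) hxy.le hβxy.le
    (fun v hv hJ => hcN y (hIcc y hy).1 (β x) (hIcc x hx).2 _ (M y (β x) v).2 _ v.2 hv
      (hmax y (β x) hlky hyβx v) hJ) hP
  rw [div_mul_eq_mul_div, le_div_iff₀ hc]
  linarith

end EigenSplitting

theorem stmt_14_general
    {n : ℕ}
    {Ωs : Set (EuclideanSpace ℝ (Fin n))}
    {X₀ : Type*} [NormedAddCommGroup X₀] [InnerProductSpace ℝ X₀]
    (T : X₀ →ₗ[ℝ] Lp ℝ 2 (volume.restrict Ωs))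
    {lk lk1 : ℝ}
    (V₁ V₂ : Submodule ℝ X₀)
    (hV₂ : ∀ v : X₀, v ∈ V₂ ↔ ∀ u ∈ V₁, ⟪u, v⟫ = 0 ∧ ⟪T u, T v⟫ = 0)
    (hV₁b : ∀ u ∈ V₁, ⟪u, u⟫ ≤ lk * ‖T u‖ ^ 2)
    (lam1 : ℝ) (hlam1 : 0 < lam1)
    (hlam1k : lam1 ≤ lk) (φ₁ : V₁)
    (hφ₁pos : ∀ᵐ x ∂(volume.restrict Ωs), 0 < (T (φ₁ : X₀)) x)
    (hφ₁eig : ∀ ψ : X₀, ⟪(φ₁ : X₀), ψ⟫ = lam1 * ⟪T (φ₁ : X₀), T ψ⟫)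
    (φk1 : V₂) (hφk1n : ‖T (φk1 : X₀)‖ = 1)
    (hcpt : ∀ (u : ℕ → X₀) (C : ℝ), (∀ j, ‖u j‖ ≤ C) →
      ∃ (w : Lp ℝ 2 (volume.restrict Ωs)) (σ : ℕ → ℕ), StrictMono σ ∧
        Tendsto (fun j => ‖T (u (σ j)) - w‖) atTop (nhds 0))
    (M : ℝ → ℝ → V₂ → V₁)
    (hM : ∀ a b : ℝ, lk < a → a ≤ b → ∀ (v : V₂) (u : V₁),
      Jfun T a b ((u : X₀) + (v : X₀)) ≤ Jfun T a b ((M a b v : X₀) + (v : X₀)))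
    (m : ℝ → ℝ → ℝ)
    (hm : ∀ a b : ℝ, lk < a → a ≤ b → m a b =
      sInf {r : ℝ | ∃ v : V₂, ‖T (v : X₀)‖ = 1 ∧ r = Jfun T a b ((M a b v : X₀) + (v : X₀))})
    (βcurve : ℝ → ℝ)
    (hβcurve : ∀ a : ℝ, lk < a → a < lk1 → a ≤ βcurve a ∧ m a (βcurve a) = 0)
    :
    (∀ a₁ b₁ a₂ b₂ : ℝ, lk < a₁ → a₁ < a₂ → a₂ < lk1 → a₁ ≤ b₁ → a₂ ≤ b₂ →
      m a₁ b₁ = 0 → m a₂ b₂ = 0 → b₂ < b₁) ∧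
    (∀ Kc : Set ℝ, IsCompact Kc → Kc ⊆ Set.Ioo lk lk1 →
      ∃ C : ℝ, 0 ≤ C ∧ ∀ a₁ ∈ Kc, ∀ a₂ ∈ Kc, |βcurve a₂ - βcurve a₁| ≤ C * |a₂ - a₁|) := by
  have hS : EigenSplitting T V₁ V₂ lk lam1 φ₁ :=
    ⟨hlam1, hlam1k, fun v hv => (hV₂ v).1 hv, hV₁b, φ₁.2, hφ₁pos, hφ₁eig, hcpt⟩
  have hmax : ∀ a b, lk < a → a ≤ b → ∀ v : V₂,
      IsMaxOn (fun x => Jfun T a b (x + v)) V₁ (M a b v) := fun a b ha hab v =>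
    isMaxOn_iff.2 fun x hx => hM a b ha hab v ⟨x, hx⟩
  have hglb : ∀ a b, lk < a → a ≤ b → IsGLB (reducedLevels T M a b) (m a b) :=
    fun a b ha hab => hm a b ha hab ▸
      isGLB_csInf ⟨_, φk1, hφk1n, rfl⟩ (bddBelow_reducedLevels (hmax a b ha hab) hab)
  have hdec : ∀ a₁ b₁ a₂ b₂ : ℝ, lk < a₁ → a₁ < a₂ → a₂ < lk1 → a₁ ≤ b₁ → a₂ ≤ b₂ →
      m a₁ b₁ = 0 → m a₂ b₂ = 0 → b₂ < b₁ := by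
    intro a₁ b₁ a₂ b₂ h₁ h₁₂ _ hab₁ hab₂ hm₁ hm₂
    by_contra! hb
    have := hS.lt_of_isGLB_reducedLevels hmax h₁ h₁₂ hab₁ hab₂ hb (hglb a₁ b₁ h₁ hab₁)
      (hglb a₂ b₂ (h₁.trans h₁₂) hab₂)
    rw [hm₁, hm₂] at this
    exact this.false
  refine ⟨hdec, fun Kc hKc hsub => ?_⟩
  have hβ : ∀ a ∈ Kc, a ≤ βcurve a ∧ m a (βcurve a) = 0 := fun a ha =>
    hβcurve a (hsub ha).1 (hsub ha).2
  exact hS.exists_abs_sub_le_mul_abs_sub hmax hglb hKc (fun x hx => (hsub hx).1) hβ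
    fun x hx y hy hxy =>
      hdec x _ y _ (hsub hx).1 hxy (hsub hy).2 (hβ x hx).1 (hβ y hy).1 (hβ x hx).2 (hβ y hy).2

theorem stmt_14
    {n : ℕ} {s : ℝ} (hs0 : 0 < s) (hs1 : s < 1) (hns : 2 * s < (n : ℝ))
    {Ωs : Set (EuclideanSpace ℝ (Fin n))} (hΩb : Bornology.IsBounded Ωs)
    (hΩm : MeasurableSet Ωs)
    {K : EuclideanSpace ℝ (Fin n) → ℝ} (hKpos : ∀ x, x ≠ 0 → 0 < K x)
    (hK1 : Integrable (fun x => min (‖x‖ ^ 2) 1 * K x))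
    (hK2 : ∃ lam > 0, ∀ x, x ≠ 0 → lam * ‖x‖ ^ (-((n : ℝ) + 2 * s)) ≤ K x)
    (hK3 : ∀ x, K (-x) = K x)
    {X₀ : Type*} [NormedAddCommGroup X₀] [InnerProductSpace ℝ X₀] [CompleteSpace X₀]
    (T : X₀ →ₗ[ℝ] Lp ℝ 2 (volume.restrict Ωs)) (hT : Function.Injective T)
    {lk lk1 : ℝ} (hlk0 : 0 < lk) (hlk : lk < lk1)
    (V₁ V₂ : Submodule ℝ X₀) [FiniteDimensional ℝ V₁]
    (hV₂ : ∀ v : X₀, v ∈ V₂ ↔ ∀ u ∈ V₁, ⟪u, v⟫ = 0 ∧ ⟪T u, T v⟫ = 0)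
    (hcompl : IsCompl V₁ V₂)
    (hV₁b : ∀ u ∈ V₁, ⟪u, u⟫ ≤ lk * ‖T u‖ ^ 2)
    (hV₂b : ∀ v ∈ V₂, lk1 * ‖T v‖ ^ 2 ≤ ⟪v, v⟫)
    (lam1 : ℝ) (hlam1 : 0 < lam1)
    (hPoin : ∀ u : X₀, lam1 * ‖T u‖ ^ 2 ≤ ⟪u, u⟫)
    (hlam1k : lam1 ≤ lk) (φ₁ : V₁)
    (hφ₁pos : ∀ᵐ x ∂(volume.restrict Ωs), 0 < (T (φ₁ : X₀)) x)
    (hφ₁eig : ∀ ψ : X₀, ⟪(φ₁ : X₀), ψ⟫ = lam1 * ⟪T (φ₁ : X₀), T ψ⟫)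
    (φk1 : V₂) (hφk1n : ‖T (φk1 : X₀)‖ = 1)
    (hφk1e : ∀ ψ : X₀, ⟪(φk1 : X₀), ψ⟫ = lk1 * ⟪T (φk1 : X₀), T ψ⟫)
    (hcpt : ∀ (u : ℕ → X₀) (C : ℝ), (∀ j, ‖u j‖ ≤ C) →
      ∃ (w : Lp ℝ 2 (volume.restrict Ωs)) (σ : ℕ → ℕ), StrictMono σ ∧
        Tendsto (fun j => ‖T (u (σ j)) - w‖) atTop (nhds 0))
    (M : ℝ → ℝ → V₂ → V₁)
    (hM : ∀ a b : ℝ, lk < a → a ≤ b → ∀ (v : V₂) (u : V₁),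
      Jfun T a b ((u : X₀) + (v : X₀)) ≤ Jfun T a b ((M a b v : X₀) + (v : X₀)))
    (m : ℝ → ℝ → ℝ)
    (hm : ∀ a b : ℝ, lk < a → a ≤ b → m a b =
      sInf {r : ℝ | ∃ v : V₂, ‖T (v : X₀)‖ = 1 ∧ r = Jfun T a b ((M a b v : X₀) + (v : X₀))})
    (βcurve : ℝ → ℝ)
    (hβcurve : ∀ a : ℝ, lk < a → a < lk1 → a ≤ βcurve a ∧ m a (βcurve a) = 0)
    :
    (∀ a₁ b₁ a₂ b₂ : ℝ, lk < a₁ → a₁ < a₂ → a₂ < lk1 → a₁ ≤ b₁ → a₂ ≤ b₂ →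
      m a₁ b₁ = 0 → m a₂ b₂ = 0 → b₂ < b₁) ∧
    (∀ Kc : Set ℝ, IsCompact Kc → Kc ⊆ Set.Ioo lk lk1 →
      ∃ C : ℝ, 0 ≤ C ∧ ∀ a₁ ∈ Kc, ∀ a₂ ∈ Kc, |βcurve a₂ - βcurve a₁| ≤ C * |a₂ - a₁|) :=
  stmt_14_general T V₁ V₂ hV₂ hV₁b lam1 hlam1 hlam1k φ₁ hφ₁pos hφ₁eig φk1 hφk1n hcpt M hM m hm
    βcurve hβcurve
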